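/- The polynomial x³ − 8x² + 4x − 2 is irreducible over ℚ and has a positive real root; for any positive real root α of this polynomial, the monoid M_α has exactly 5 atoms and exactly 4 strong atoms, i.e., |A(M_α)| = 5 and |S(M_α)| = 4. -/

import Mathlib

open Polynomial

/-- `M_α`: the additive submonoid of `ℂ` generated by the nonnegative powers of `α`. -/
def Malpha (α : ℂ) : AddSubmonoid ℂ :=
  AddSubmonoid.closure (Set.range fun n : ℕ => α ^ n)

/-- The set of atoms of `M_α`: nonzero elements of `M_α` that cannot be written as a sum
of two nonzero elements of `M_α`. -/
def atomsM (α : ℂ) : Set ℂ :=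
  {a | a ∈ Malpha α ∧ a ≠ 0 ∧
    ∀ u v : ℂ, u ∈ Malpha α → v ∈ Malpha α → a = u + v → u = 0 ∨ v = 0}

/-- `M_α` is atomic: every nonzero element is a finite sum of atoms. -/
def IsAtomicMalpha (α : ℂ) : Prop :=
  ∀ x ∈ Malpha α, x ≠ 0 →
    ∃ s : Multiset ℂ, (∀ a ∈ s, a ∈ atomsM α) ∧ s.sum = x

/-- The set of strong atoms of `M_α`: atoms `a` such that for every `n ≥ 1` the only
multiset of atoms summing to `n • a` is the one consisting of `n` copies of `a`. -/
def strongAtomsM (α : ℂ) : Set ℂ :=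
  {a | a ∈ atomsM α ∧ ∀ n : ℕ, 0 < n →
    ∀ s : Multiset ℂ, (∀ b ∈ s, b ∈ atomsM α) → s.sum = n • a →
      s = Multiset.replicate n a}


noncomputable def V (β : ℂ) (a b c d e : ℕ) : ℂ :=
  (a : ℂ) * β ^ 4 + (b : ℂ) * β ^ 3 + (c : ℂ) * β ^ 2 + (d : ℂ) * β + (e : ℂ)

section Beta
variable {β : ℂ}

lemma coord_inj (hind : ∀ q₂ q₁ q₀ : ℚ, (q₂ : ℂ) * β ^ 2 + q₁ * β + q₀ = 0 → q₂ = 0 ∧ q₁ = 0 ∧ q₀ = 0)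
    (z₂ z₁ z₀ w₂ w₁ w₀ : ℤ)
    (h : (z₂ : ℂ) * β ^ 2 + (z₁ : ℂ) * β + (z₀ : ℂ) = (w₂ : ℂ) * β ^ 2 + (w₁ : ℂ) * β + (w₀ : ℂ)) :
    z₂ = w₂ ∧ z₁ = w₁ ∧ z₀ = w₀ := by
  obtain ⟨h2, h1, h0⟩ := hind ((z₂ - w₂ : ℤ) : ℚ) ((z₁ - w₁ : ℤ) : ℚ) ((z₀ - w₀ : ℤ) : ℚ)
    (by push_cast; linear_combination h)
  have h2' : z₂ - w₂ = 0 := by exact_mod_cast h2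
  have h1' : z₁ - w₁ = 0 := by exact_mod_cast h1
  have h0' : z₀ - w₀ = 0 := by exact_mod_cast h0
  omega

lemma val_coord (hβ3 : β ^ 3 = 8 * β ^ 2 - 4 * β + 2) (a b c d e : ℕ) :
    V β a b c d e = ((60 * a + 8 * b + c : ℤ) : ℂ) * β ^ 2
      + (((d : ℤ) - 30 * a - 4 * b : ℤ) : ℂ) * β + ((16 * a + 2 * b + e : ℤ) : ℂ) := by
  simp only [V]; push_cast
  linear_combination ((a : ℂ) * β + 8 * (a : ℂ) + (b : ℂ)) * hβ3

lemma val_inj (hβ3 : β ^ 3 = 8 * β ^ 2 - 4 * β + 2)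
    (hind : ∀ q₂ q₁ q₀ : ℚ, (q₂ : ℂ) * β ^ 2 + q₁ * β + q₀ = 0 → q₂ = 0 ∧ q₁ = 0 ∧ q₀ = 0)
    {a b c d e a' b' c' d' e' : ℕ} (h : V β a b c d e = V β a' b' c' d' e') :
    (60 * a + 8 * b + c : ℤ) = (60 * a' + 8 * b' + c' : ℤ)
      ∧ ((d : ℤ) - 30 * a - 4 * b) = ((d' : ℤ) - 30 * a' - 4 * b')
      ∧ (16 * a + 2 * b + e : ℤ) = (16 * a' + 2 * b' + e' : ℤ) := by
  apply coord_inj hind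
  rw [← val_coord hβ3, ← val_coord hβ3]; exact h

lemma V_add (a b c d e a' b' c' d' e' : ℕ) :
    V β a b c d e + V β a' b' c' d' e' = V β (a + a') (b + b') (c + c') (d + d') (e + e') := by
  simp only [V]; push_cast; ring

lemma mem_iff (hβ3 : β ^ 3 = 8 * β ^ 2 - 4 * β + 2) (x : ℂ) :
    x ∈ Malpha β ↔ ∃ a b c d e : ℕ, x = V β a b c d e := by
  constructor
  · intro hx
    induction hx using AddSubmonoid.closure_induction with
    | mem y hy =>
      obtain ⟨n, rfl⟩ := hy
      induction n with
      | zero => exact ⟨0, 0, 0, 0, 1, by simp [V]⟩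
      | succ n ih =>
        obtain ⟨a, b, c, d, e, h⟩ := ih
        refine ⟨6 * a + b, 11 * a + c, 2 * a + d, e, 2 * a, ?_⟩
        show β ^ (n + 1) = _
        have h' : β ^ n = V β a b c d e := h
        have hstep : β ^ (n + 1) = β * β ^ n := by ring
        rw [hstep, h']; simp only [V]; push_cast
        linear_combination ((a : ℂ) * (β ^ 2 + 2 * β + 1)) * hβ3
    | zero => exact ⟨0, 0, 0, 0, 0, by simp [V]⟩
    | add x y hx hy ihx ihy =>
      obtain ⟨a, b, c, d, e, hx'⟩ := ihx
      obtain ⟨a', b', c', d', e', hy'⟩ := ihy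
      exact ⟨a + a', b + b', c + c', d + d', e + e', by rw [hx', hy', V_add]⟩
  · rintro ⟨a, b, c, d, e, rfl⟩
    have hp : ∀ n : ℕ, β ^ n ∈ Malpha β := fun n => AddSubmonoid.subset_closure ⟨n, rfl⟩
    have hm : ∀ k n : ℕ, (k : ℂ) * β ^ n ∈ Malpha β := by
      intro k n
      rw [← nsmul_eq_mul]
      exact AddSubmonoid.nsmul_mem _ (hp n) k
    have h0 : (e : ℂ) ∈ Malpha β := by simpa using hm e 0
    have h1 : (d : ℂ) * β ∈ Malpha β := by simpa using hm d 1
    exact add_mem (add_mem (add_mem (add_mem (hm a 4) (hm b 3)) (hm c 2)) h1) h0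
end Beta
section Beta2
variable {β : ℂ}
variable (hβ3 : β ^ 3 = 8 * β ^ 2 - 4 * β + 2)
variable (hind : ∀ q₂ q₁ q₀ : ℚ, (q₂ : ℂ) * β ^ 2 + q₁ * β + q₀ = 0 → q₂ = 0 ∧ q₁ = 0 ∧ q₀ = 0)
include hβ3 hind

lemma V_eq_zero {a b c d e : ℕ} (h : V β a b c d e = 0) :
    a = 0 ∧ b = 0 ∧ c = 0 ∧ d = 0 ∧ e = 0 := by
  have h' : V β a b c d e = V β 0 0 0 0 0 := by simpa [V] using h
  have := val_inj hβ3 hind h'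
  omega

omit hind in
lemma beta_ne_zero : β ≠ 0 := by
  intro h; rw [h] at hβ3; norm_num at hβ3

-- coordinates of n • generators
lemma rep_one {n a b c d e : ℕ} (h : V β a b c d e = (n : ℂ)) :
    a = 0 ∧ b = 0 ∧ c = 0 ∧ d = 0 ∧ e = n := by
  have h' : V β a b c d e = V β 0 0 0 0 n := by rw [h]; simp [V]
  have := val_inj hβ3 hind h'; omega

lemma rep_beta {n a b c d e : ℕ} (h : V β a b c d e = (n : ℂ) * β) :
    a = 0 ∧ b = 0 ∧ c = 0 ∧ d = n ∧ e = 0 := by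
  have h' : V β a b c d e = V β 0 0 0 n 0 := by rw [h]; simp [V]
  have := val_inj hβ3 hind h'; omega

lemma rep_beta2 {n a b c d e : ℕ} (h : V β a b c d e = (n : ℂ) * β ^ 2) :
    a = 0 ∧ b = 0 ∧ c = n ∧ d = 0 ∧ e = 0 := by
  have h' : V β a b c d e = V β 0 0 n 0 0 := by rw [h]; simp [V]
  have := val_inj hβ3 hind h'; omega

lemma rep_beta3 {n a b c d e : ℕ} (h : V β a b c d e = (n : ℂ) * β ^ 3) :
    a = 0 ∧ b = n ∧ c = 0 ∧ d = 0 ∧ e = 0 := by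
  have h' : V β a b c d e = V β 0 n 0 0 0 := by rw [h]; simp [V]
  have := val_inj hβ3 hind h'; omega

lemma rep_beta4 {a b c d e : ℕ} (h : V β a b c d e = β ^ 4) :
    a = 1 ∧ b = 0 ∧ c = 0 ∧ d = 0 ∧ e = 0 := by
  have h' : V β a b c d e = V β 1 0 0 0 0 := by rw [h]; simp [V]
  have := val_inj hβ3 hind h'
  have ha : a ≤ 1 := by omega
  interval_cases a <;> omega

lemma pows_distinct :
    β ≠ 1 ∧ β ^ 2 ≠ 1 ∧ β ^ 3 ≠ 1 ∧ β ^ 4 ≠ 1 ∧ β ^ 2 ≠ β ∧ β ^ 3 ≠ β ∧ β ^ 4 ≠ β ∧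
      β ^ 3 ≠ β ^ 2 ∧ β ^ 4 ≠ β ^ 2 ∧ β ^ 4 ≠ β ^ 3 := by
  refine ⟨fun h => ?_, fun h => ?_, fun h => ?_, fun h => ?_, fun h => ?_, fun h => ?_,
    fun h => ?_, fun h => ?_, fun h => ?_, fun h => ?_⟩ <;>
  · first
    | (have h' : V β 0 0 0 1 0 = V β 0 0 0 0 1 := by simp [V, h]
       have := val_inj hβ3 hind h'; omega)
    | (have h' : V β 0 0 1 0 0 = V β 0 0 0 0 1 := by simp [V, h]
       have := val_inj hβ3 hind h'; omega)
    | (have h' : V β 0 1 0 0 0 = V β 0 0 0 0 1 := by simp [V, h]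
       have := val_inj hβ3 hind h'; omega)
    | (have h' : V β 1 0 0 0 0 = V β 0 0 0 0 1 := by simp [V, h]
       have := val_inj hβ3 hind h'; omega)
    | (have h' : V β 0 0 1 0 0 = V β 0 0 0 1 0 := by simp [V, h]
       have := val_inj hβ3 hind h'; omega)
    | (have h' : V β 0 1 0 0 0 = V β 0 0 0 1 0 := by simp [V, h]
       have := val_inj hβ3 hind h'; omega)
    | (have h' : V β 1 0 0 0 0 = V β 0 0 0 1 0 := by simp [V, h]
       have := val_inj hβ3 hind h'; omega)
    | (have h' : V β 0 1 0 0 0 = V β 0 0 1 0 0 := by simp [V, h]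
       have := val_inj hβ3 hind h'; omega)
    | (have h' : V β 1 0 0 0 0 = V β 0 0 1 0 0 := by simp [V, h]
       have := val_inj hβ3 hind h'; omega)
    | (have h' : V β 1 0 0 0 0 = V β 0 1 0 0 0 := by simp [V, h]
       have := val_inj hβ3 hind h'; omega)

end Beta2
section Beta3
variable {β : ℂ}
variable (hβ3 : β ^ 3 = 8 * β ^ 2 - 4 * β + 2)
variable (hind : ∀ q₂ q₁ q₀ : ℚ, (q₂ : ℂ) * β ^ 2 + q₁ * β + q₀ = 0 → q₂ = 0 ∧ q₁ = 0 ∧ q₀ = 0)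
include hβ3 hind

lemma atoms_eq : atomsM β = {1, β, β ^ 2, β ^ 3, β ^ 4} := by
  ext x
  simp only [Set.mem_insert_iff, Set.mem_singleton_iff]
  constructor
  · rintro ⟨hxM, hx0, hxa⟩
    obtain ⟨a, b, c, d, e, rfl⟩ := (mem_iff hβ3 _).mp hxM
    have hne : ¬(a = 0 ∧ b = 0 ∧ c = 0 ∧ d = 0 ∧ e = 0) := by
      rintro ⟨rfl, rfl, rfl, rfl, rfl⟩; exact hx0 (by simp [V])
    by_cases h2 : 2 ≤ a + b + c + d + e
    · exfalso
      have key : ∀ a₁ b₁ c₁ d₁ e₁ a₂ b₂ c₂ d₂ e₂ : ℕ,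
          a = a₁ + a₂ → b = b₁ + b₂ → c = c₁ + c₂ → d = d₁ + d₂ → e = e₁ + e₂ →
          a₁ + b₁ + c₁ + d₁ + e₁ ≠ 0 → a₂ + b₂ + c₂ + d₂ + e₂ ≠ 0 → False := by
        intro a₁ b₁ c₁ d₁ e₁ a₂ b₂ c₂ d₂ e₂ ha hb hc hd he h1 h2'
        subst ha hb hc hd he
        rcases hxa (V β a₁ b₁ c₁ d₁ e₁) (V β a₂ b₂ c₂ d₂ e₂)
            ((mem_iff hβ3 _).mpr ⟨_, _, _, _, _, rfl⟩)
            ((mem_iff hβ3 _).mpr ⟨_, _, _, _, _, rfl⟩)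
            (by rw [V_add]) with h | h
        · exact h1 (by have := V_eq_zero hβ3 hind h; omega)
        · exact h2' (by have := V_eq_zero hβ3 hind h; omega)
      rcases Nat.eq_zero_or_pos a with ha | ha
      · rcases Nat.eq_zero_or_pos b with hb | hb
        · rcases Nat.eq_zero_or_pos c with hc | hc
          · rcases Nat.eq_zero_or_pos d with hd | hd
            · exact key 0 0 0 0 1 0 0 0 0 (e - 1) (by omega) (by omega) (by omega)
                (by omega) (by omega) (by omega) (by omega)
            · exact key 0 0 0 1 0 a b c (d - 1) e (by omega) (by omega) (by omega)
                (by omega) (by omega) (by omega) (by omega)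
          · exact key 0 0 1 0 0 a b (c - 1) d e (by omega) (by omega) (by omega)
              (by omega) (by omega) (by omega) (by omega)
        · exact key 0 1 0 0 0 a (b - 1) c d e (by omega) (by omega) (by omega)
            (by omega) (by omega) (by omega) (by omega)
      · exact key 1 0 0 0 0 (a - 1) b c d e (by omega) (by omega) (by omega)
          (by omega) (by omega) (by omega) (by omega)
    · have h1 : (a = 1 ∧ b = 0 ∧ c = 0 ∧ d = 0 ∧ e = 0) ∨
          (a = 0 ∧ b = 1 ∧ c = 0 ∧ d = 0 ∧ e = 0) ∨
          (a = 0 ∧ b = 0 ∧ c = 1 ∧ d = 0 ∧ e = 0) ∨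
          (a = 0 ∧ b = 0 ∧ c = 0 ∧ d = 1 ∧ e = 0) ∨
          (a = 0 ∧ b = 0 ∧ c = 0 ∧ d = 0 ∧ e = 1) := by omega
      rcases h1 with ⟨rfl, rfl, rfl, rfl, rfl⟩ | ⟨rfl, rfl, rfl, rfl, rfl⟩ |
        ⟨rfl, rfl, rfl, rfl, rfl⟩ | ⟨rfl, rfl, rfl, rfl, rfl⟩ | ⟨rfl, rfl, rfl, rfl, rfl⟩ <;>
        simp [V]
  · have hmem : ∀ a b c d e : ℕ, V β a b c d e ∈ Malpha β :=
      fun a b c d e => (mem_iff hβ3 _).mpr ⟨_, _, _, _, _, rfl⟩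
    have hsplit : ∀ u v : ℂ, u ∈ Malpha β → v ∈ Malpha β →
        ∀ x : ℂ, x = u + v →
        (∀ A B C D E : ℕ, V β A B C D E = x →
          (A = 0 ∧ B = 0 ∧ C = 0 ∧ D = 0 ∧ E = 0) ∨ A + B + C + D + E = 1) →
        u = 0 ∨ v = 0 := by
      intro u v hu hv x hx huniq
      obtain ⟨a, b, c, d, e, rfl⟩ := (mem_iff hβ3 u).mp hu
      obtain ⟨a', b', c', d', e', rfl⟩ := (mem_iff hβ3 v).mp hv
      have hsum : V β (a + a') (b + b') (c + c') (d + d') (e + e') = x := by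
        rw [hx, V_add]
      rcases huniq _ _ _ _ _ hsum with h | h
      · left
        have : a = 0 ∧ b = 0 ∧ c = 0 ∧ d = 0 ∧ e = 0 := by omega
        obtain ⟨rfl, rfl, rfl, rfl, rfl⟩ := this; simp [V]
      · have hor : (a = 0 ∧ b = 0 ∧ c = 0 ∧ d = 0 ∧ e = 0) ∨
            (a' = 0 ∧ b' = 0 ∧ c' = 0 ∧ d' = 0 ∧ e' = 0) := by omega
        rcases hor with ⟨rfl, rfl, rfl, rfl, rfl⟩ | ⟨rfl, rfl, rfl, rfl, rfl⟩
        · left; simp [V]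
        · right; simp [V]
    rintro (rfl | rfl | rfl | rfl | rfl)
    · refine ⟨by simpa [V] using hmem 0 0 0 0 1, one_ne_zero, fun u v hu hv huv => ?_⟩
      refine hsplit u v hu hv _ huv ?_
      intro A B C D E hV
      have := rep_one hβ3 hind (n := 1) (by rw [hV]; norm_num)
      omega
    · refine ⟨by simpa [V] using hmem 0 0 0 1 0, beta_ne_zero hβ3, fun u v hu hv huv => ?_⟩
      refine hsplit u v hu hv _ huv ?_
      intro A B C D E hV
      have := rep_beta hβ3 hind (n := 1) (by rw [hV, Nat.cast_one, one_mul])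
      omega
    · refine ⟨by simpa [V] using hmem 0 0 1 0 0, pow_ne_zero _ (beta_ne_zero hβ3),
        fun u v hu hv huv => ?_⟩
      refine hsplit u v hu hv _ huv ?_
      intro A B C D E hV
      have := rep_beta2 hβ3 hind (n := 1) (by rw [hV, Nat.cast_one, one_mul])
      omega
    · refine ⟨by simpa [V] using hmem 0 1 0 0 0, pow_ne_zero _ (beta_ne_zero hβ3),
        fun u v hu hv huv => ?_⟩
      refine hsplit u v hu hv _ huv ?_
      intro A B C D E hV
      have := rep_beta3 hβ3 hind (n := 1) (by rw [hV, Nat.cast_one, one_mul])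
      omega
    · refine ⟨by simpa [V] using hmem 1 0 0 0 0, pow_ne_zero _ (beta_ne_zero hβ3),
        fun u v hu hv huv => ?_⟩
      refine hsplit u v hu hv _ huv ?_
      intro A B C D E hV
      have := rep_beta4 hβ3 hind hV
      omega

lemma sum_counts (s : Multiset ℂ)
    (hs : ∀ b ∈ s, b = 1 ∨ b = β ∨ b = β ^ 2 ∨ b = β ^ 3 ∨ b = β ^ 4) :
    s.sum = V β (s.count (β ^ 4)) (s.count (β ^ 3)) (s.count (β ^ 2)) (s.count β)
      (s.count 1) := by
  obtain ⟨hne1, hne2, hne3, hne4, hne5, hne6, hne7, hne8, hne9, hne10⟩ := pows_distinct hβ3 hind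
  induction s using Multiset.induction with
  | empty => simp [V]
  | cons x t ih =>
    have hx := hs x (Multiset.mem_cons_self x t)
    have ht : ∀ b ∈ t, b = 1 ∨ b = β ∨ b = β ^ 2 ∨ b = β ^ 3 ∨ b = β ^ 4 :=
      fun b hb => hs b (Multiset.mem_cons_of_mem hb)
    rw [Multiset.sum_cons, ih ht]
    rcases hx with rfl | rfl | rfl | rfl | rfl
    · rw [Multiset.count_cons_of_ne hne4, Multiset.count_cons_of_ne hne3,
        Multiset.count_cons_of_ne hne2, Multiset.count_cons_of_ne hne1,
        Multiset.count_cons_self]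
      simp only [V]; push_cast; ring
    · rw [Multiset.count_cons_of_ne hne7, Multiset.count_cons_of_ne hne6,
        Multiset.count_cons_of_ne hne5, Multiset.count_cons_self,
        Multiset.count_cons_of_ne (Ne.symm hne1)]
      simp only [V]; push_cast; ring
    · rw [Multiset.count_cons_of_ne hne9, Multiset.count_cons_of_ne hne8,
        Multiset.count_cons_self, Multiset.count_cons_of_ne (Ne.symm hne5),
        Multiset.count_cons_of_ne (Ne.symm hne2)]
      simp only [V]; push_cast; ring
    · rw [Multiset.count_cons_of_ne hne10, Multiset.count_cons_self,
        Multiset.count_cons_of_ne (Ne.symm hne8), Multiset.count_cons_of_ne (Ne.symm hne6),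
        Multiset.count_cons_of_ne (Ne.symm hne3)]
      simp only [V]; push_cast; ring
    · rw [Multiset.count_cons_self, Multiset.count_cons_of_ne (Ne.symm hne10),
        Multiset.count_cons_of_ne (Ne.symm hne9), Multiset.count_cons_of_ne (Ne.symm hne7),
        Multiset.count_cons_of_ne (Ne.symm hne4)]
      simp only [V]; push_cast; ring

end Beta3
section Beta4
variable {β : ℂ}
variable (hβ3 : β ^ 3 = 8 * β ^ 2 - 4 * β + 2)
variable (hind : ∀ q₂ q₁ q₀ : ℚ, (q₂ : ℂ) * β ^ 2 + q₁ * β + q₀ = 0 → q₂ = 0 ∧ q₁ = 0 ∧ q₀ = 0)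
include hβ3 hind

lemma strong_eq : strongAtomsM β = {1, β, β ^ 2, β ^ 3} := by
  have hatoms := atoms_eq hβ3 hind
  have hs5 : ∀ s : Multiset ℂ, (∀ b ∈ s, b ∈ atomsM β) →
      ∀ b ∈ s, b = 1 ∨ b = β ∨ b = β ^ 2 ∨ b = β ^ 3 ∨ b = β ^ 4 := by
    intro s hsm b hb
    have := hsm b hb; rw [hatoms] at this; simpa using this
  ext x
  simp only [Set.mem_insert_iff, Set.mem_singleton_iff]
  constructor
  · rintro ⟨hatom, hstr⟩
    have hx5 : x = 1 ∨ x = β ∨ x = β ^ 2 ∨ x = β ^ 3 ∨ x = β ^ 4 := by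
      have := hatom; rw [hatoms] at this; simpa using this
    rcases hx5 with rfl | rfl | rfl | rfl | rfl
    · exact Or.inl rfl
    · exact Or.inr (Or.inl rfl)
    · exact Or.inr (Or.inr (Or.inl rfl))
    · exact Or.inr (Or.inr (Or.inr rfl))
    · exfalso
      have hmem : ∀ b ∈ (Multiset.replicate 15 (β ^ 3) + Multiset.replicate 2 (1 : ℂ)),
          b ∈ atomsM β := by
        intro b hb
        rw [hatoms]
        rcases Multiset.mem_add.mp hb with hb | hb <;>
          rw [Multiset.eq_of_mem_replicate hb] <;> simp
      have hsum : (Multiset.replicate 15 (β ^ 3) + Multiset.replicate 2 (1 : ℂ)).sum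
          = 2 • β ^ 4 := by
        rw [Multiset.sum_add, Multiset.sum_replicate, Multiset.sum_replicate,
          nsmul_eq_mul, nsmul_eq_mul, nsmul_eq_mul]
        push_cast
        linear_combination (-(2 * β + 1)) * hβ3
      have h := hstr 2 (by norm_num) _ hmem hsum
      have hcard := congrArg Multiset.card h
      simp at hcard
  · intro hx
    have hx4 : x ∈ atomsM β := by
      rw [hatoms]
      rcases hx with rfl | rfl | rfl | rfl <;> simp
    refine ⟨hx4, ?_⟩
    intro n hn s hsm hsum
    rw [sum_counts hβ3 hind s (hs5 s hsm)] at hsum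
    rcases hx with rfl | rfl | rfl | rfl
    · rw [nsmul_eq_mul, mul_one] at hsum
      obtain ⟨h4, h3, h2', h1', h0'⟩ := rep_one hβ3 hind hsum
      have hall : ∀ b ∈ s, b = 1 := by
        intro b hb
        rcases hs5 s hsm b hb with rfl | rfl | rfl | rfl | rfl
        · rfl
        · exact absurd hb (Multiset.count_eq_zero.mp h1')
        · exact absurd hb (Multiset.count_eq_zero.mp h2')
        · exact absurd hb (Multiset.count_eq_zero.mp h3)
        · exact absurd hb (Multiset.count_eq_zero.mp h4)
      have hrepl := Multiset.eq_replicate_card.mpr hall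
      rw [hrepl, Multiset.count_replicate_self] at h0'
      rw [← h0']; exact hrepl
    · rw [nsmul_eq_mul] at hsum
      obtain ⟨h4, h3, h2', h1', h0'⟩ := rep_beta hβ3 hind hsum
      have hall : ∀ b ∈ s, b = x := by
        intro b hb
        rcases hs5 s hsm b hb with rfl | rfl | rfl | rfl | rfl
        · exact absurd hb (Multiset.count_eq_zero.mp h0')
        · rfl
        · exact absurd hb (Multiset.count_eq_zero.mp h2')
        · exact absurd hb (Multiset.count_eq_zero.mp h3)
        · exact absurd hb (Multiset.count_eq_zero.mp h4)
      have hrepl := Multiset.eq_replicate_card.mpr hall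
      rw [hrepl, Multiset.count_replicate_self] at h1'
      rw [← h1']; exact hrepl
    · rw [nsmul_eq_mul] at hsum
      obtain ⟨h4, h3, h2', h1', h0'⟩ := rep_beta2 hβ3 hind hsum
      have hall : ∀ b ∈ s, b = β ^ 2 := by
        intro b hb
        rcases hs5 s hsm b hb with rfl | rfl | rfl | rfl | rfl
        · exact absurd hb (Multiset.count_eq_zero.mp h0')
        · exact absurd hb (Multiset.count_eq_zero.mp h1')
        · rfl
        · exact absurd hb (Multiset.count_eq_zero.mp h3)
        · exact absurd hb (Multiset.count_eq_zero.mp h4)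
      have hrepl := Multiset.eq_replicate_card.mpr hall
      rw [hrepl, Multiset.count_replicate_self] at h2'
      rw [← h2']; exact hrepl
    · rw [nsmul_eq_mul] at hsum
      obtain ⟨h4, h3, h2', h1', h0'⟩ := rep_beta3 hβ3 hind hsum
      have hall : ∀ b ∈ s, b = β ^ 3 := by
        intro b hb
        rcases hs5 s hsm b hb with rfl | rfl | rfl | rfl | rfl
        · exact absurd hb (Multiset.count_eq_zero.mp h0')
        · exact absurd hb (Multiset.count_eq_zero.mp h1')
        · exact absurd hb (Multiset.count_eq_zero.mp h2')
        · rfl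
        · exact absurd hb (Multiset.count_eq_zero.mp h4)
      have hrepl := Multiset.eq_replicate_card.mpr hall
      rw [hrepl, Multiset.count_replicate_self] at h3
      rw [← h3]; exact hrepl

lemma encard_atoms : (atomsM β).encard = 5 := by
  obtain ⟨hne1, hne2, hne3, hne4, hne5, hne6, hne7, hne8, hne9, hne10⟩ := pows_distinct hβ3 hind
  rw [atoms_eq hβ3 hind]
  rw [Set.encard_insert_of_notMem (by
      simp only [Set.mem_insert_iff, Set.mem_singleton_iff]; push_neg
      exact ⟨Ne.symm hne1, Ne.symm hne2, Ne.symm hne3, Ne.symm hne4⟩),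
    Set.encard_insert_of_notMem (by
      simp only [Set.mem_insert_iff, Set.mem_singleton_iff]; push_neg
      exact ⟨Ne.symm hne5, Ne.symm hne6, Ne.symm hne7⟩),
    Set.encard_insert_of_notMem (by
      simp only [Set.mem_insert_iff, Set.mem_singleton_iff]; push_neg
      exact ⟨Ne.symm hne8, Ne.symm hne9⟩),
    Set.encard_insert_of_notMem (by
      simp only [Set.mem_singleton_iff]
      exact Ne.symm hne10),
    Set.encard_singleton]
  rfl

lemma encard_strong : (strongAtomsM β).encard = 4 := by
  obtain ⟨hne1, hne2, hne3, hne4, hne5, hne6, hne7, hne8, hne9, hne10⟩ := pows_distinct hβ3 hind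
  rw [strong_eq hβ3 hind]
  rw [Set.encard_insert_of_notMem (by
      simp only [Set.mem_insert_iff, Set.mem_singleton_iff]; push_neg
      exact ⟨Ne.symm hne1, Ne.symm hne2, Ne.symm hne3⟩),
    Set.encard_insert_of_notMem (by
      simp only [Set.mem_insert_iff, Set.mem_singleton_iff]; push_neg
      exact ⟨Ne.symm hne5, Ne.symm hne6⟩),
    Set.encard_insert_of_notMem (by
      simp only [Set.mem_singleton_iff]
      exact Ne.symm hne8),
    Set.encard_singleton]
  rfl

end Beta4

noncomputable def zp : ℤ[X] := X ^ 3 - 8 * X ^ 2 + 4 * X - 2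

lemma zp_natDegree : zp.natDegree = 3 := by unfold zp; compute_degree!

lemma zp_degree : zp.degree = 3 := by unfold zp; compute_degree!

lemma zp_monic : zp.Monic := by unfold zp; monicity!

lemma zp_irred : Irreducible zp := by
  apply irreducible_of_eisenstein_criterion (P := Ideal.span {(2 : ℤ)})
  · exact Ideal.span_singleton_prime (by norm_num) |>.mpr Int.prime_two
  · rw [zp_monic.leadingCoeff, Ideal.mem_span_singleton]; norm_num
  · intro n hn
    rw [zp_degree] at hn
    have hn3 : n < 3 := by exact_mod_cast hn
    interval_cases n <;>
      simp [zp, Ideal.mem_span_singleton, coeff_sub, coeff_ofNat_mul, coeff_X_pow, coeff_X,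
        coeff_one] <;> decide
  · rw [zp_degree]; norm_num
  · rw [Ideal.span_singleton_pow, Ideal.mem_span_singleton]
    simp [zp, coeff_sub, coeff_ofNat_mul, coeff_X_pow, coeff_X, coeff_one]
  · exact zp_monic.isPrimitive

lemma qp_irred : Irreducible ((X : ℚ[X]) ^ 3 - 8 * X ^ 2 + 4 * X - 2) := by
  have h := (IsPrimitive.Int.irreducible_iff_irreducible_map_cast zp_monic.isPrimitive).mp zp_irred
  have heq : zp.map (Int.castRingHom ℚ) = (X : ℚ[X]) ^ 3 - 8 * X ^ 2 + 4 * X - 2 := by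
    simp [zp]
  rwa [heq] at h

lemma aeval_eval (α : ℝ) :
    aeval α ((X : ℚ[X]) ^ 3 - 8 * X ^ 2 + 4 * X - 2) = α ^ 3 - 8 * α ^ 2 + 4 * α - 2 := by
  simp [map_ofNat]

lemma exists_root : ∃ α : ℝ, 0 < α ∧
    aeval α ((X : ℚ[X]) ^ 3 - 8 * X ^ 2 + 4 * X - 2) = 0 := by
  have hcont : ContinuousOn (fun x : ℝ => x ^ 3 - 8 * x ^ 2 + 4 * x - 2) (Set.Icc 7 8) :=
    (by continuity : Continuous fun x : ℝ => x ^ 3 - 8 * x ^ 2 + 4 * x - 2).continuousOn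
  have h0 : (0 : ℝ) ∈ Set.Icc ((fun x : ℝ => x ^ 3 - 8 * x ^ 2 + 4 * x - 2) 7)
      ((fun x : ℝ => x ^ 3 - 8 * x ^ 2 + 4 * x - 2) 8) := by norm_num
  obtain ⟨α, hmem, hfα⟩ := intermediate_value_Icc (by norm_num : (7 : ℝ) ≤ 8) hcont h0
  refine ⟨α, by have := hmem.1; linarith, ?_⟩
  rw [aeval_eval]
  exact hfα

theorem stmt_15 :
    Irreducible ((X : ℚ[X]) ^ 3 - 8 * X ^ 2 + 4 * X - 2) ∧
    (∃ α : ℝ, 0 < α ∧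
      Polynomial.aeval α ((X : ℚ[X]) ^ 3 - 8 * X ^ 2 + 4 * X - 2) = 0) ∧
    ∀ α : ℝ, 0 < α →
      Polynomial.aeval α ((X : ℚ[X]) ^ 3 - 8 * X ^ 2 + 4 * X - 2) = 0 →
      (atomsM (α : ℂ)).encard = 5 ∧ (strongAtomsM (α : ℂ)).encard = 4 := by
  refine ⟨qp_irred, exists_root, ?_⟩
  intro α hα hroot
  have hre : α ^ 3 - 8 * α ^ 2 + 4 * α - 2 = 0 := by rw [← aeval_eval]; exact hroot
  have hβ3 : (α : ℂ) ^ 3 = 8 * (α : ℂ) ^ 2 - 4 * (α : ℂ) + 2 := by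
    have h2 := congrArg (fun t : ℝ => (t : ℂ)) hre
    push_cast at h2
    linear_combination h2
  have hind : ∀ q₂ q₁ q₀ : ℚ, (q₂ : ℂ) * (α : ℂ) ^ 2 + q₁ * (α : ℂ) + q₀ = 0 →
      q₂ = 0 ∧ q₁ = 0 ∧ q₀ = 0 := by
    intro q₂ q₁ q₀ h
    have hℝ : (q₂ : ℝ) * α ^ 2 + (q₁ : ℝ) * α + (q₀ : ℝ) = 0 := by exact_mod_cast h
    set q : ℚ[X] := C q₂ * X ^ 2 + C q₁ * X + C q₀ with hqdef
    have hq0 : aeval α q = 0 := by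
      rw [hqdef]
      simp only [map_add, map_mul, map_pow, aeval_X, aeval_C, eq_ratCast]
      exact hℝ
    have hq : q = 0 := by
      by_contra hne
      have hdle := minpoly.degree_le_of_ne_zero ℚ α hne hq0
      have hmp : minpoly ℚ α = (X : ℚ[X]) ^ 3 - 8 * X ^ 2 + 4 * X - 2 :=
        (minpoly.eq_of_irreducible_of_monic qp_irred hroot (by monicity!)).symm
      have hd3 : ((X : ℚ[X]) ^ 3 - 8 * X ^ 2 + 4 * X - 2).degree = 3 := by compute_degree!
      rw [hmp, hd3] at hdle
      have hd2 : q.degree ≤ 2 := by rw [hqdef]; exact degree_quadratic_le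
      have : (3 : WithBot ℕ) ≤ 2 := hdle.trans hd2
      exact absurd this (by decide)
    refine ⟨?_, ?_, ?_⟩
    · have := congrArg (fun p : ℚ[X] => p.coeff 2) hq
      simpa [hqdef, coeff_X, coeff_C] using this
    · have := congrArg (fun p : ℚ[X] => p.coeff 1) hq
      simpa [hqdef, coeff_X, coeff_C] using this
    · have := congrArg (fun p : ℚ[X] => p.coeff 0) hq
      simpa [hqdef, coeff_X, coeff_C] using this
  exact ⟨encard_atoms hβ3 hind, encard_strong hβ3 hind⟩
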